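/- Let p and q be orthogonal projections on a finite-dimensional Hilbert space (equivalently, in M_n(ℂ)). Then the sequence (qpq)^n converges in norm to the projection p ∧ q onto the intersection of the ranges of p and q. -/

import Mathlib

/-!
`T = qpq = (pq)†(pq)` is a positive contraction, so in an orthonormal eigenbasis of `T` the powers
`T ^ n` act by `μ ^ n` with `μ ∈ [0, 1]`. Eigenvectors with `μ < 1` are orthogonal to the
`1`-eigenspace and die out, those with `μ = 1` are fixed; so `T ^ n` converges on a basis, hence in
norm, to the projection onto the `1`-eigenspace. That eigenspace is `range p ∩ range q`: if
`qpq v = v` then `q v = v`, so `‖v‖ = ‖q (p v)‖ ≤ ‖p v‖ ≤ ‖v‖`, and a vector whose norm is not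
decreased by an orthogonal projection lies in its range.
-/

open Filter Topology Module.End

namespace Module.Basis

variable {𝕜 E F α ι : Type*} [NontriviallyNormedField 𝕜] [CompleteSpace 𝕜]
  [NormedAddCommGroup E] [NormedSpace 𝕜 E] [NormedAddCommGroup F] [NormedSpace 𝕜 F] [Fintype ι]

theorem tendsto_continuousLinearMap_of_tendsto_apply (b : Basis ι 𝕜 E) {l : Filter α}
    {f : α → E →L[𝕜] F} {g : E →L[𝕜] F}
    (h : ∀ i, Tendsto (fun a ↦ f a (b i)) l (𝓝 (g (b i)))) : Tendsto f l (𝓝 g) := by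
  set C := Fintype.card ι • ‖b.equivFunL.toContinuousLinearMap‖
  have hsum : Tendsto (fun a ↦ C * ∑ i, ‖f a (b i) - g (b i)‖) l (𝓝 0) := by
    simpa using (tendsto_finsetSum Finset.univ fun i _ ↦
      tendsto_iff_norm_sub_tendsto_zero.mp (h i)).const_mul C
  refine tendsto_iff_norm_sub_tendsto_zero.mpr <|
    squeeze_zero (fun _ ↦ norm_nonneg _) (fun a ↦ ?_) hsum
  exact b.opNorm_le (by positivity) fun i ↦
    Finset.single_le_sum (f := fun i ↦ ‖f a (b i) - g (b i)‖) (fun _ _ ↦ norm_nonneg _)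
      (Finset.mem_univ i)

end Module.Basis

namespace ContinuousLinearMap

variable {𝕜 E : Type*} [RCLike 𝕜] [NormedAddCommGroup E] [InnerProductSpace 𝕜 E]
  [FiniteDimensional 𝕜 E]

theorem IsPositive.tendsto_pow_starProjection_eigenspace_one {T : E →L[𝕜] E}
    (hT : T.IsPositive) (hT₁ : ‖T‖ ≤ 1) :
    Tendsto (T ^ ·) atTop (𝓝 (eigenspace (T : E →ₗ[𝕜] E) 1).starProjection) := by
  set K := eigenspace (T : E →ₗ[𝕜] E) 1
  have hS := hT.isSymmetric
  set b := hS.eigenvectorBasis rfl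
  refine b.toBasis.tendsto_continuousLinearMap_of_tendsto_apply fun i ↦ ?_
  set μ := hS.eigenvalues rfl i
  have hb : HasEigenvector (T : E →ₗ[𝕜] E) μ (b i) := hS.hasEigenvector_eigenvectorBasis rfl i
  have hpow (n : ℕ) : (T ^ n) (b i) = (μ : 𝕜) ^ n • b i := by
    rw [← hb.pow_apply n, ← toLinearMap_pow]; rfl
  have hμ₀ : 0 ≤ μ := hT.toLinearMap.nonneg_eigenvalues rfl i
  have hμ₁ : μ ≤ 1 := by
    have := T.le_opNorm (b i)
    rw [show T (b i) = (μ : 𝕜) • b i from hb.apply_eq_smul, norm_smul, b.norm_eq_one, mul_one,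
      mul_one, RCLike.norm_ofReal, abs_of_nonneg hμ₀] at this
    exact this.trans hT₁
  simp only [OrthonormalBasis.coe_toBasis, hpow]
  rcases hμ₁.eq_or_lt with hμ | hμ
  · have hbK : b i ∈ K := by
      have := hb.1
      rwa [hμ, RCLike.ofReal_one] at this
    simp [hμ, Submodule.starProjection_eq_self_iff.mpr hbK]
  · have hbK : b i ∈ Kᗮ := Submodule.isOrtho_iff_le.mp
      (hS.orthogonalFamily_eigenspaces.isOrtho (by exact_mod_cast hμ.ne)) hb.1
    rw [(Submodule.starProjection_apply_eq_zero_iff K).mpr hbK, ← zero_smul 𝕜 (b i)]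
    refine (tendsto_pow_atTop_nhds_zero_of_norm_lt_one ?_).smul_const (b i)
    rwa [RCLike.norm_ofReal, abs_of_nonneg hμ₀]

end ContinuousLinearMap

namespace Submodule

variable {𝕜 E : Type*} [RCLike 𝕜] [NormedAddCommGroup E] [InnerProductSpace 𝕜 E]
  (U V : Submodule 𝕜 E) [U.HasOrthogonalProjection] [V.HasOrthogonalProjection]

theorem eigenspace_starProjection_mul_mul_one :
    eigenspace (↑(V.starProjection * U.starProjection * V.starProjection) : E →ₗ[𝕜] E) 1 =
      U ⊓ V := by
  ext v
  rw [mem_eigenspace_iff, one_smul, mem_inf]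
  constructor
  · intro hv
    have hvV : v ∈ V := hv ▸ V.starProjection_apply_mem _
    have hqpv : V.starProjection (U.starProjection v) = v := by
      simpa [starProjection_eq_self_iff.mpr hvV] using hv
    refine ⟨(U.mem_iff_norm_starProjection v).mpr
      (le_antisymm (U.norm_starProjection_apply_le v) ?_), hvV⟩
    calc ‖v‖ = ‖V.starProjection (U.starProjection v)‖ := by rw [hqpv]
      _ ≤ ‖U.starProjection v‖ := V.norm_starProjection_apply_le _
  · rintro ⟨hvU, hvV⟩
    simp [starProjection_eq_self_iff.mpr hvU, starProjection_eq_self_iff.mpr hvV]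

theorem tendsto_pow_starProjection_mul_mul [FiniteDimensional 𝕜 E] :
    Tendsto (fun n ↦ (V.starProjection * U.starProjection * V.starProjection) ^ n) atTop
      (𝓝 (U ⊓ V).starProjection) := by
  have := FiniteDimensional.complete 𝕜 E
  have hpos : (V.starProjection * U.starProjection * V.starProjection).IsPositive := by
    have := (ContinuousLinearMap.IsPositive.of_isStarProjection
      (isStarProjection_starProjection (U := U))).conj_adjoint V.starProjection
    rwa [(isSelfAdjoint_starProjection V).adjoint_eq, ← ContinuousLinearMap.comp_assoc] at this
  have hnorm : ‖V.starProjection * U.starProjection * V.starProjection‖ ≤ 1 :=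
    (norm_mul_le_of_le (norm_mul_le_of_le V.starProjection_norm_le U.starProjection_norm_le)
      V.starProjection_norm_le).trans_eq (by norm_num)
  convert hpos.tendsto_pow_starProjection_eigenspace_one hnorm using 3
  exact (eigenspace_starProjection_mul_mul_one U V).symm

end Submodule

/-- Let `p` and `q` be orthogonal projections on a finite-dimensional (complex) Hilbert
space.  Then `(qpq)^n` converges in (operator) norm to the orthogonal projection onto
`range p ∩ range q`. -/
theorem tendsto_pow_qpq {H : Type*} [NormedAddCommGroup H] [InnerProductSpace ℂ H]
    [FiniteDimensional ℂ H]
    (p q : H →L[ℂ] H)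
    (hp_sa : IsSelfAdjoint p) (hp_idem : p * p = p)
    (hq_sa : IsSelfAdjoint q) (hq_idem : q * q = q) :
    Tendsto (fun n : ℕ => (q * p * q) ^ n) atTop
      (nhds ((LinearMap.range (p : H →ₗ[ℂ] H) ⊓ LinearMap.range (q : H →ₗ[ℂ] H)).subtypeL ∘L
        Submodule.orthogonalProjectionOnto (LinearMap.range (p : H →ₗ[ℂ] H) ⊓ LinearMap.range (q : H →ₗ[ℂ] H)))) := by
  obtain ⟨U, _, rfl⟩ := isStarProjection_iff_eq_starProjection.mp ⟨hp_idem, hp_sa⟩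
  obtain ⟨V, _, rfl⟩ := isStarProjection_iff_eq_starProjection.mp ⟨hq_idem, hq_sa⟩
  change Tendsto _ _ (𝓝 (Submodule.starProjection _))
  convert U.tendsto_pow_starProjection_mul_mul V using 4
  · exact U.range_starProjection
  · exact V.range_starProjection
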